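/- Let C be a bialgebra with a projection onto a Hopf algebra H (bialgebra maps i: H → C, π: C → H, π∘i = id_H). Define Π = id_C ⋆ (i∘S∘π), the convolution product in End(C), i.e., Π(c) = c₁ i(S(π(c₂))). Then (C, Π) is a Rota-Baxter coalgebra of weight −1: Π(c₁)⊗Π(c₂) = Π(c)₁⊗Π(Π(c)₂) + Π(Π(c)₁)⊗Π(c)₂ − Π(c)₁⊗Π(c)₂ for all c ∈ C. -/

import Mathlib

open TensorProduct LinearMap

/-- Rota--Baxter coalgebra of weight `γ`:
`Q(c₁)⊗Q(c₂) = Q(c)₁⊗Q(Q(c)₂) + Q(Q(c)₁)⊗Q(c)₂ + γ Q(c)₁⊗Q(c)₂`. -/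
def IsRotaBaxterCoalgebra (K : Type*) [Field K] {C : Type*} [AddCommGroup C] [Module K C]
    (D : C →ₗ[K] C ⊗[K] C) (Q : C →ₗ[K] C) (γ : K) : Prop :=
  TensorProduct.map Q Q ∘ₗ D =
    lTensor C Q ∘ₗ D ∘ₗ Q + rTensor C Q ∘ₗ D ∘ₗ Q + γ • (D ∘ₗ Q)

/-!
Write `T = i ∘ S ∘ π` (`retractAntipode`), so that `Π = id ⋆ T` (`coinvariantProj`).
Since `π ∘ i = id` and `S` is anti-multiplicative, `Π (x · i h) = ε(h) Π(x)`; hence `id ⊗ Π`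
and `Π ⊗ id` commute with right multiplication by `Δ(i h)` up to the factors `i h ⊗ 1` and
`1 ⊗ i h`. As `Δ` is multiplicative, `Δ ∘ Π = Δ ⋆ (Δ ∘ T)` in the convolution algebra
`Hom(C, C ⊗ C)`, and coassociativity gives
`(Π ⊗ id) Δ Π = (Π ⊗ id) Δ ⋆ (1 ⊗ T) = (Π ⊗ Π) Δ` and
`(id ⊗ Π) Δ Π = Δ ⋆ (1 ⊗ T) ⋆ (T ⊗ 1) = Δ ⋆ (T ⊗ T) τ Δ = Δ ⋆ (Δ ∘ T) = Δ Π`,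
the last line because `Δ ∘ S = (S ⊗ S) τ Δ`. Adding the two identities gives weight `-1`.
-/

open Coalgebra WithConv
open Algebra.TensorProduct (includeLeft includeRight)
open scoped RingTheory.LinearMap

namespace LinearMap

variable {R C A B A' : Type*} [CommSemiring R] [AddCommMonoid C] [Module R C]
  [Semiring A] [Algebra R A] [Semiring B] [Algebra R B] [Semiring A'] [Algebra R A']

section CoalgebraStruct

variable [CoalgebraStruct R C]

lemma comp_convMul_of_map_mul (L : A →ₗ[R] A') (f g : WithConv (C →ₗ[R] A))
    (g' : WithConv (C →ₗ[R] A')) (h : ∀ a c, L (a * g c) = L a * g' c) :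
    toConv (L ∘ₗ (f * g).ofConv) = toConv (L ∘ₗ f.ofConv) * g' := by
  have key : L ∘ₗ μ ∘ₗ (f.ofConv ⊗ₘ g.ofConv) = μ ∘ₗ ((L ∘ₗ f.ofConv) ⊗ₘ g'.ofConv) := by
    ext a c; simp [h]
  simp only [convMul_def, ofConv_toConv, ← comp_assoc] at key ⊢
  rw [key]

lemma includeRight_convMul_includeLeft (f : C →ₗ[R] A) (g : C →ₗ[R] B) :
    toConv (includeRight.toLinearMap ∘ₗ g) *
        toConv ((includeLeft (S := R)).toLinearMap ∘ₗ f) =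
      toConv ((f ⊗ₘ g) ∘ₗ (TensorProduct.comm R C C).toLinearMap ∘ₗ δ) := by
  have key : μ ∘ₗ map (includeRight.toLinearMap ∘ₗ g)
      ((includeLeft (S := R)).toLinearMap ∘ₗ f) =
      (f ⊗ₘ g) ∘ₗ (TensorProduct.comm R C C).toLinearMap := by
    ext a b; simp
  simp only [convMul_def, ← comp_assoc, key]

end CoalgebraStruct

variable [Coalgebra R C]

lemma map_comp_comul_convMul_includeRight (f : C →ₗ[R] A) (g h : C →ₗ[R] B) :
    toConv ((f ⊗ₘ g) ∘ₗ δ) * toConv (includeRight.toLinearMap ∘ₗ h) =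
      toConv ((f ⊗ₘ (toConv g * toConv h).ofConv) ∘ₗ δ) := by
  have key : μ ∘ₗ map (f ⊗ₘ g) (includeRight.toLinearMap ∘ₗ h) =
      (f ⊗ₘ (μ ∘ₗ (g ⊗ₘ h))) ∘ₗ (TensorProduct.assoc R C C C).toLinearMap := by
    ext a b c; simp
  rw [convMul_def, convMul_def]
  congr 1
  calc μ ∘ₗ map ((f ⊗ₘ g) ∘ₗ δ) (includeRight.toLinearMap ∘ₗ h) ∘ₗ δ
      = (μ ∘ₗ map (f ⊗ₘ g) (includeRight.toLinearMap ∘ₗ h)) ∘ₗ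
          rTensor C δ ∘ₗ δ := by simp [comp_assoc, ← map_comp_rTensor]
    _ = (f ⊗ₘ (μ ∘ₗ (g ⊗ₘ h))) ∘ₗ lTensor C δ ∘ₗ δ := by
          rw [key, comp_assoc, coassoc]
    _ = _ := by simp [← comp_assoc, map_comp_lTensor]

lemma includeLeft_convMul_map_comp_comul (f g : C →ₗ[R] A) (h : C →ₗ[R] B) :
    toConv ((includeLeft (S := R)).toLinearMap ∘ₗ f) *
        toConv ((g ⊗ₘ h) ∘ₗ δ) =
      toConv (((toConv f * toConv g).ofConv ⊗ₘ h) ∘ₗ δ) := by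
  have key : μ ∘ₗ map ((includeLeft (S := R)).toLinearMap ∘ₗ f) (g ⊗ₘ h) =
      ((μ ∘ₗ (f ⊗ₘ g)) ⊗ₘ h) ∘ₗ (TensorProduct.assoc R C C C).symm.toLinearMap := by
    ext a b c; simp
  rw [convMul_def, convMul_def]
  congr 1
  calc μ ∘ₗ map ((includeLeft (S := R)).toLinearMap ∘ₗ f)
          ((g ⊗ₘ h) ∘ₗ δ) ∘ₗ δ
      = (μ ∘ₗ map ((includeLeft (S := R)).toLinearMap ∘ₗ f) (g ⊗ₘ h)) ∘ₗ
          lTensor C δ ∘ₗ δ := by simp [comp_assoc, ← map_comp_lTensor]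
    _ = ((μ ∘ₗ (f ⊗ₘ g)) ⊗ₘ h) ∘ₗ rTensor C δ ∘ₗ δ := by
          rw [key, comp_assoc, coassoc_symm]
    _ = _ := by simp [← comp_assoc, map_comp_rTensor]

end LinearMap

namespace HopfAlgebra

variable {R H : Type*} [CommSemiring R] [Semiring H] [HopfAlgebra R H]

-- `(S ⊗ S) τ Δ = (1 ⊗ S) ⋆ (S ⊗ 1)` is a left convolution inverse of `Δ`, and `Δ ∘ S` a right one.
lemma comul_comp_antipode :
    δ ∘ₗ antipode R =
      (antipode R ⊗ₘ antipode R) ∘ₗ (TensorProduct.comm R H H).toLinearMap ∘ₗ δ := by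
  set incL := (includeLeft (S := R) (R := R) (A := H) (B := H)).toLinearMap
  set incR := (includeRight (R := R) (A := H) (B := H)).toLinearMap
  have counit_tmul : ((Algebra.linearMap R H ∘ₗ ε) ⊗ₘ LinearMap.id) ∘ₗ δ = incR := by
    rw [← rTensor_def, rTensor_comp, comp_assoc, rTensor_counit_comp_comul]
    ext; simp [incR]
  have incL_antipode_mul_comul : toConv (incL ∘ₗ antipode R) * toConv δ = toConv incR := by
    have := includeLeft_convMul_map_comp_comul (antipode R) LinearMap.id (LinearMap.id : H →ₗ[R] H)
    rwa [map_id, id_comp, antipode_mul_id, LinearMap.convOne_def, ofConv_toConv,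
      counit_tmul] at this
  have incR_antipode_mul_incR : toConv (incR ∘ₗ antipode R) * toConv incR = 1 := by
    have := algHom_comp_convMul_distrib (includeRight (A := H))
      (toConv (antipode R (A := H))) (toConv LinearMap.id)
    rw [antipode_mul_id, ofConv_toConv, comp_id] at this
    apply WithConv.ext
    rw [← this, LinearMap.convOne_def, LinearMap.convOne_def]
    ext
    simp [Algebra.algebraMap_eq_smul_one, Algebra.TensorProduct.one_def]
  have left_inv : toConv ((antipode R ⊗ₘ antipode R) ∘ₗ
      (TensorProduct.comm R H H).toLinearMap ∘ₗ δ) * toConv δ = 1 := by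
    rw [← includeRight_convMul_includeLeft, mul_assoc, incL_antipode_mul_comul,
      incR_antipode_mul_incR]
  exact toConv_injective (left_inv_eq_right_inv left_inv comul_right_inv).symm

end HopfAlgebra

open HopfAlgebra

section BialgebraWithProjection

variable {R H C : Type*} [CommSemiring R] [Semiring H] [HopfAlgebra R H] [Semiring C]
  [Bialgebra R C] (i : H →ₐc[R] C) (π : C →ₐc[R] H)

noncomputable def retractAntipode : C →ₗ[R] C :=
  i.toLinearMap ∘ₗ antipode R ∘ₗ π.toLinearMap

noncomputable def coinvariantProj : C →ₗ[R] C :=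
  (toConv LinearMap.id * toConv (retractAntipode i π)).ofConv

variable {i π}

lemma retractAntipode_apply (x : C) : retractAntipode i π x = i (antipode R (π x)) := rfl

lemma retractAntipode_mul_map (hπi : ∀ h, π (i h) = h) (x : C) (h : H) :
    retractAntipode i π (x * i h) = i (antipode R h) * retractAntipode i π x := by
  simp [retractAntipode_apply, hπi, antipode_mul_antidistrib]

lemma coinvariantProj_mul_map (hπi : ∀ h, π (i h) = h) (x : C) (h : H) :
    coinvariantProj i π (x * i h) = counit (R := R) h • coinvariantProj i π x := by
  let 𝓡x := ℛ R x
  let 𝓡h := ℛ R h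
  calc coinvariantProj i π (x * i h)
      = ∑ a ∈ 𝓡x.index, 𝓡x.left a * i (∑ b ∈ 𝓡h.index, 𝓡h.left b * antipode R (𝓡h.right b)) *
          retractAntipode i π (𝓡x.right a) := by
        simp [coinvariantProj, (𝓡x.mul (𝓡h.induced i)).convMul_apply, Finset.sum_product,
          retractAntipode_mul_map hπi, Finset.mul_sum, Finset.sum_mul, mul_assoc]
    _ = counit (R := R) h • coinvariantProj i π x := by
        simp [sum_mul_antipode_eq_algebraMap_counit, coinvariantProj, 𝓡x.convMul_apply,
          Finset.smul_sum, Algebra.algebraMap_eq_smul_one]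

lemma comul_comp_retractAntipode :
    δ ∘ₗ retractAntipode i π = (retractAntipode i π ⊗ₘ retractAntipode i π) ∘ₗ
      (TensorProduct.comm R C C).toLinearMap ∘ₗ δ := by
  have hi : δ ∘ₗ i.toLinearMap = (i.toLinearMap ⊗ₘ i.toLinearMap) ∘ₗ δ :=
    (CoalgHomClass.map_comp_comul i).symm
  have hπ : δ ∘ₗ π.toLinearMap = (π.toLinearMap ⊗ₘ π.toLinearMap) ∘ₗ δ :=
    (CoalgHomClass.map_comp_comul π).symm
  have hcomm : (i.toLinearMap ⊗ₘ i.toLinearMap) ∘ₗ (antipode R ⊗ₘ antipode R) ∘ₗ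
      (TensorProduct.comm R H H).toLinearMap ∘ₗ (π.toLinearMap ⊗ₘ π.toLinearMap) =
      (retractAntipode i π ⊗ₘ retractAntipode i π) ∘ₗ (TensorProduct.comm R C C).toLinearMap := by
    ext; rfl
  calc δ ∘ₗ retractAntipode i π
      = (i.toLinearMap ⊗ₘ i.toLinearMap) ∘ₗ (δ ∘ₗ antipode R) ∘ₗ π.toLinearMap := by
        rw [retractAntipode, ← comp_assoc, hi, comp_assoc, comp_assoc]
    _ = _ := by
        rw [comul_comp_antipode]
        simpa only [comp_assoc, hπ] using congrArg (· ∘ₗ δ) hcomm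

lemma lTensor_coinvariantProj_mul_comul_map (hπi : ∀ h, π (i h) = h) (z : C ⊗[R] C) (h : H) :
    lTensor C (coinvariantProj i π) (z * δ (i h)) =
      lTensor C (coinvariantProj i π) z * (i h ⊗ₜ 1) := by
  induction z using TensorProduct.induction_on with
  | zero => simp
  | add z w hz hw => simp [add_mul, hz, hw]
  | tmul a b =>
    have := congrArg
      (map (mulLeft R a ∘ₗ i.toLinearMap) (toSpanSingleton R C (coinvariantProj i π b)))
      (sum_tmul_counit_eq (ℛ R h))
    simp only [map_sum, map_tmul] at this
    simp [← ((ℛ R h).induced i).eq, Finset.mul_sum, coinvariantProj_mul_map hπi, tmul_smul,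
      smul_tmul'] at this ⊢
    exact this

lemma rTensor_coinvariantProj_mul_comul_map (hπi : ∀ h, π (i h) = h) (z : C ⊗[R] C) (h : H) :
    rTensor C (coinvariantProj i π) (z * δ (i h)) =
      rTensor C (coinvariantProj i π) z * (1 ⊗ₜ i h) := by
  induction z using TensorProduct.induction_on with
  | zero => simp
  | add z w hz hw => simp [add_mul, hz, hw]
  | tmul a b =>
    have := congrArg
      (map (toSpanSingleton R C (coinvariantProj i π a)) (mulLeft R b ∘ₗ i.toLinearMap))
      (sum_counit_tmul_eq (ℛ R h))
    simp only [map_sum, map_tmul] at this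
    simp [← ((ℛ R h).induced i).eq, Finset.mul_sum, coinvariantProj_mul_map hπi] at this ⊢
    exact this

lemma toConv_comul_comp_coinvariantProj :
    toConv (δ ∘ₗ coinvariantProj i π) = toConv δ * toConv (δ ∘ₗ retractAntipode i π) := by
  simpa [coinvariantProj] using congrArg toConv <| algHom_comp_convMul_distrib
    (Bialgebra.comulAlgHom R C) (toConv LinearMap.id) (toConv (retractAntipode i π))

lemma lTensor_coinvariantProj_comp_comul_comp_coinvariantProj (hπi : ∀ h, π (i h) = h) :
    lTensor C (coinvariantProj i π) ∘ₗ δ ∘ₗ coinvariantProj i π = δ ∘ₗ coinvariantProj i π := by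
  apply toConv_injective
  calc toConv (lTensor C (coinvariantProj i π) ∘ₗ δ ∘ₗ coinvariantProj i π)
      = toConv (lTensor C (coinvariantProj i π) ∘ₗ δ) *
          toConv ((includeLeft (S := R)).toLinearMap ∘ₗ retractAntipode i π) := by
        rw [← ofConv_toConv (δ ∘ₗ coinvariantProj i π), toConv_comul_comp_coinvariantProj]
        exact comp_convMul_of_map_mul _ _ _ _
          fun z _ => lTensor_coinvariantProj_mul_comul_map hπi z _
    _ = toConv δ * toConv (includeRight.toLinearMap ∘ₗ retractAntipode i π) *
          toConv ((includeLeft (S := R)).toLinearMap ∘ₗ retractAntipode i π) := by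
        have := map_comp_comul_convMul_includeRight LinearMap.id LinearMap.id (retractAntipode i π)
        rw [map_id, id_comp] at this
        rw [this]
        rfl
    _ = toConv (δ ∘ₗ coinvariantProj i π) := by
        rw [mul_assoc, includeRight_convMul_includeLeft, ← comul_comp_retractAntipode,
          toConv_comul_comp_coinvariantProj]

lemma rTensor_coinvariantProj_comp_comul_comp_coinvariantProj (hπi : ∀ h, π (i h) = h) :
    rTensor C (coinvariantProj i π) ∘ₗ δ ∘ₗ coinvariantProj i π =
      (coinvariantProj i π ⊗ₘ coinvariantProj i π) ∘ₗ δ := by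
  apply toConv_injective
  calc toConv (rTensor C (coinvariantProj i π) ∘ₗ δ ∘ₗ coinvariantProj i π)
      = toConv (rTensor C (coinvariantProj i π) ∘ₗ δ) *
          toConv (includeRight.toLinearMap ∘ₗ retractAntipode i π) := by
        rw [← ofConv_toConv (δ ∘ₗ coinvariantProj i π), toConv_comul_comp_coinvariantProj]
        exact comp_convMul_of_map_mul _ _ _ _
          fun z _ => rTensor_coinvariantProj_mul_comul_map hπi z _
    _ = _ := map_comp_comul_convMul_includeRight _ _ _

end BialgebraWithProjection

theorem bialgebraWithProjection_rotaBaxterCoalgebra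
    (K : Type*) [Field K]
    (H : Type*) [Ring H] [HopfAlgebra K H]
    (C : Type*) [Ring C] [Bialgebra K C]
    (i : H →ₐc[K] C) (π : C →ₐc[K] H) (hπi : ∀ h : H, π (i h) = h)
    -- Pi = id_C ⋆ (i ∘ S ∘ π), i.e. Pi(c) = c₁ i(S(π(c₂)))
    (Pi : C →ₗ[K] C)
    (hPi : Pi = LinearMap.mul' K C ∘ₗ
      lTensor C (i.toLinearMap ∘ₗ HopfAlgebra.antipode (R := K) ∘ₗ π.toLinearMap) ∘ₗ
        Coalgebra.comul (R := K)) :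
    IsRotaBaxterCoalgebra K (Coalgebra.comul (R := K)) Pi (-1) := by
  obtain rfl : Pi = coinvariantProj i π := hPi
  rw [IsRotaBaxterCoalgebra, lTensor_coinvariantProj_comp_comul_comp_coinvariantProj hπi,
    rTensor_coinvariantProj_comp_comul_comp_coinvariantProj hπi]
  module
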